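/- arXiv:2605.28293 — 2 statements merged into one kernel-verified Lean document; each statement's English description precedes it below -/
import Mathlib

section
/- Let L ≥ 2 be an integer and μ_1, …, μ_L, μ_min real numbers with μ_t ≥ μ_min > 0 for all t. Define J(p) = Σ_{t=1}^{L} μ_t (1-p)^{t-1} and F(θ) = J(σ(θ)), and let θ : ℝ → ℝ be differentiable with θ'(s) = F'(θ(s)) for all s ≥ 0; set p(s) = σ(θ(s)). Then: (1) p is strictly decreasing on [0, ∞) and p(s) → 0 as s → ∞; (2) there exist constants S > 0 and K > 0 such that p(s) ≤ K/s for all s ≥ S; (3) the expected path length Σ_{t=1}^{L} (1-p(s))^{t-1} converges to L as s → ∞. -/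
open Filter Finset

/-- The sigmoid function `σ(θ) = 1 / (1 + exp (-θ))`. -/
noncomputable def sigmoid (x : ℝ) : ℝ := 1 / (1 + Real.exp (-x))



lemma sigmoid_pos (x : ℝ) : 0 < sigmoid x := by unfold sigmoid; positivity

lemma sigmoid_lt_one (x : ℝ) : sigmoid x < 1 := by
  unfold sigmoid
  rw [div_lt_one (by positivity)]
  linarith [Real.exp_pos (-x)]

lemma sigmoid_hasDerivAt (x : ℝ) :
    HasDerivAt sigmoid (sigmoid x * (1 - sigmoid x)) x := by
  have h1 : HasDerivAt (fun y : ℝ => 1 + Real.exp (-y)) (-Real.exp (-x)) x := by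
    have := (Real.hasDerivAt_exp (-x)).comp x ((hasDerivAt_id x).neg)
    simpa using (this.const_add 1)
  have h2 := h1.inv (by positivity)
  have h3 : sigmoid = (fun y : ℝ => 1 + Real.exp (-y))⁻¹ := by
    funext y; simp [sigmoid, one_div]
  have he : (0:ℝ) < 1 + Real.exp (-x) := by positivity
  have h4 : - -Real.exp (-x) / (1 + Real.exp (-x)) ^ 2 = sigmoid x * (1 - sigmoid x) := by
    unfold sigmoid
    field_simp <;> ring
  rw [h4, ← h3] at h2
  exact h2

/-- **Length Collapse Rate.** Under gradient flow `θ'(s) = F'(θ(s))` with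
`F(θ) = J(σ(θ))` and `J(p) = ∑_{t=1}^L μ_t (1-p)^{t-1}` where all `μ_t ≥ μ_min > 0`:
(1) the stopping probability `p(s) = σ(θ(s))` is strictly decreasing on `[0,∞)` and
tends to `0`; (2) there are `S, K > 0` with `p(s) ≤ K / s` for `s ≥ S`; (3) the
expected path length `∑_{t=1}^L (1 - p(s))^{t-1}` converges to `L`. -/
theorem length_collapse_rate
    (L : ℕ) (hL : 2 ≤ L) (μ : ℕ → ℝ) (μmin : ℝ)
    (hμmin : 0 < μmin) (hμ : ∀ t ∈ Finset.Icc 1 L, μmin ≤ μ t)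
    (J F : ℝ → ℝ)
    (hJ : ∀ q : ℝ, J q = ∑ t ∈ Finset.Icc 1 L, μ t * (1 - q) ^ (t - 1))
    (hF : ∀ x : ℝ, F x = J (sigmoid x))
    (θ : ℝ → ℝ) (hθ : Differentiable ℝ θ)
    (hflow : ∀ s : ℝ, 0 ≤ s → deriv θ s = deriv F (θ s))
    (p : ℝ → ℝ) (hp : ∀ s, p s = sigmoid (θ s)) :
    StrictAntiOn p (Set.Ici (0 : ℝ)) ∧
    Tendsto p atTop (nhds 0) ∧
    (∃ S > (0 : ℝ), ∃ K > (0 : ℝ), ∀ s ≥ S, p s ≤ K / s) ∧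
    Tendsto (fun s => ∑ t ∈ Finset.Icc 1 L, (1 - p s) ^ (t - 1))
      atTop (nhds (L : ℝ)) := by
  -- explicit derivative of J
  set D : ℝ → ℝ :=
    fun q => ∑ t ∈ Finset.Icc 1 L, μ t * (((t - 1 : ℕ) : ℝ) * (1 - q) ^ (t - 1 - 1) * (-1))
    with hD
  have hJd : ∀ q : ℝ, HasDerivAt J (D q) q := by
    intro q
    have : HasDerivAt (fun q : ℝ => ∑ t ∈ Finset.Icc 1 L, μ t * (1 - q) ^ (t - 1)) (D q) q := by
      apply HasDerivAt.fun_sum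
      intro t ht
      have hbase : HasDerivAt (fun q : ℝ => 1 - q) (-1) q := by
        simpa using (hasDerivAt_id q).const_sub 1
      exact (hbase.pow (t - 1)).const_mul (μ t)
    have hfun : J = fun q : ℝ => ∑ t ∈ Finset.Icc 1 L, μ t * (1 - q) ^ (t - 1) := funext hJ
    rw [hfun]
    exact this
  -- D q ≤ -μmin for q ≤ 1
  have hDle : ∀ q : ℝ, q ≤ 1 → D q ≤ -μmin := by
    intro q hq
    have h2 : (2 : ℕ) ∈ Finset.Icc 1 L := by simp [Finset.mem_Icc]; omega
    have hsingle : μ 2 * (((2 - 1 : ℕ) : ℝ) * (1 - q) ^ (2 - 1 - 1) * 1)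
        ≤ ∑ t ∈ Finset.Icc 1 L, μ t * (((t - 1 : ℕ) : ℝ) * (1 - q) ^ (t - 1 - 1) * 1) := by
      apply Finset.single_le_sum (f := fun t => μ t * (((t - 1 : ℕ) : ℝ) * (1 - q) ^ (t - 1 - 1) * 1)) _ h2
      intro t ht
      have hμt : 0 ≤ μ t := le_trans hμmin.le (hμ t ht)
      have : (0:ℝ) ≤ (1 - q) ^ (t - 1 - 1) := pow_nonneg (by linarith) _
      positivity
    have hμ2 : μmin ≤ μ 2 := hμ 2 h2
    have hx : μ 2 * (((2 - 1 : ℕ) : ℝ) * (1 - q) ^ (2 - 1 - 1) * 1) = μ 2 := by norm_num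
    have hDq : D q = -∑ t ∈ Finset.Icc 1 L, μ t * (((t - 1 : ℕ) : ℝ) * (1 - q) ^ (t - 1 - 1) * 1) := by
      rw [show D q = ∑ t ∈ Finset.Icc 1 L,
            μ t * (((t - 1 : ℕ) : ℝ) * (1 - q) ^ (t - 1 - 1) * (-1)) from rfl,
          ← Finset.sum_neg_distrib]
      exact Finset.sum_congr rfl (fun t _ => by ring)
    rw [hDq]
    rw [hx] at hsingle
    linarith
  -- derivative of F
  have hFd : ∀ x : ℝ, HasDerivAt F (D (sigmoid x) * (sigmoid x * (1 - sigmoid x))) x := by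
    intro x
    have hfun : F = J ∘ sigmoid := funext (by simp [hF, Function.comp])
    rw [hfun]
    exact (hJd (sigmoid x)).comp x (sigmoid_hasDerivAt x)
  have hderivF : ∀ x : ℝ, deriv F x = D (sigmoid x) * (sigmoid x * (1 - sigmoid x)) :=
    fun x => (hFd x).deriv
  -- derivative of p
  have hpd : ∀ s : ℝ, HasDerivAt p ((sigmoid (θ s) * (1 - sigmoid (θ s))) * deriv θ s) s := by
    intro s
    have hfun : p = sigmoid ∘ θ := funext (by simp [hp, Function.comp])
    rw [hfun]
    exact (sigmoid_hasDerivAt (θ s)).comp s (hθ s).hasDerivAt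
  have hpdiff : Differentiable ℝ p := fun s => (hpd s).differentiableAt
  have hp0 : ∀ s : ℝ, 0 < p s := fun s => by rw [hp]; exact sigmoid_pos _
  have hp1 : ∀ s : ℝ, p s < 1 := fun s => by rw [hp]; exact sigmoid_lt_one _
  have hderivp : ∀ s : ℝ, 0 ≤ s →
      deriv p s = (p s * (1 - p s)) ^ 2 * D (p s) := by
    intro s hs
    rw [(hpd s).deriv, hflow s hs, hderivF, ← hp s]
    ring
  have hple : ∀ s : ℝ, 0 ≤ s → deriv p s ≤ -μmin * (p s * (1 - p s)) ^ 2 := by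
    intro s hs
    rw [hderivp s hs]
    have hpos : (0:ℝ) < (p s * (1 - p s)) ^ 2 :=
      pow_pos (mul_pos (hp0 s) (by linarith [hp1 s])) 2
    nlinarith [hDle (p s) (hp1 s).le]
  -- Part 1
  have part1 : StrictAntiOn p (Set.Ici (0 : ℝ)) := by
    apply strictAntiOn_of_deriv_neg (convex_Ici 0) hpdiff.continuous.continuousOn
    intro x hx
    rw [interior_Ici] at hx
    have := hple x (le_of_lt hx)
    have hpos : (0:ℝ) < (p x * (1 - p x)) ^ 2 :=
      pow_pos (mul_pos (hp0 x) (by linarith [hp1 x])) 2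
    nlinarith
  have hanti : AntitoneOn p (Set.Ici (0:ℝ)) := part1.antitoneOn
  -- small values
  have hsmall : ∀ ε : ℝ, 0 < ε → ∃ s₀ : ℝ, 0 ≤ s₀ ∧ p s₀ < ε := by
    intro ε hε
    by_contra hcon
    push_neg at hcon
    have hlb : ∀ s : ℝ, 0 ≤ s → ε ≤ p s := fun s hs => hcon s hs
    set c : ℝ := μmin * (ε * (1 - p 0)) ^ 2 with hc
    have hp00 : p 0 < 1 := hp1 0
    have hcpos : 0 < c := by
      have hε1 : ε ≤ p 0 := hlb 0 le_rfl
      have : 0 < 1 - p 0 := by linarith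
      positivity
    have hgd : ∀ x : ℝ, HasDerivAt (fun s => p s + c * s) (deriv p x + c) x := by
      intro x
      exact (hpdiff x).hasDerivAt.add (by simpa using (hasDerivAt_id x).const_mul c)
    have hgdiff : Differentiable ℝ (fun s => p s + c * s) :=
      fun x => (hgd x).differentiableAt
    have hg : AntitoneOn (fun s => p s + c * s) (Set.Ici (0:ℝ)) := by
      apply antitoneOn_of_deriv_nonpos (convex_Ici 0) hgdiff.continuous.continuousOn
      · intro x hx
        exact (hgdiff x).differentiableWithinAt
      · intro x hx
        rw [interior_Ici] at hx
        have hx0 : (0:ℝ) ≤ x := hx.le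
        rw [(hgd x).deriv]
        have h1 := hple x hx0
        have hεx : ε ≤ p x := hlb x hx0
        have hpx1 : p x ≤ p 0 := hanti (Set.mem_Ici.2 le_rfl) (Set.mem_Ici.2 hx0) hx0
        have hsq : (ε * (1 - p 0)) ^ 2 ≤ (p x * (1 - p x)) ^ 2 := by
          have h1p : 0 < 1 - p 0 := by linarith
          have h2 : ε * (1 - p 0) ≤ p x * (1 - p x) := by nlinarith
          exact pow_le_pow_left₀ (mul_nonneg hε.le h1p.le) h2 2
        nlinarith
    have harg : (0:ℝ) ≤ (p 0 + 1)/c := le_of_lt (div_pos (by linarith [hp0 0]) hcpos)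
    have hbig := hg (Set.mem_Ici.2 (le_refl 0)) (Set.mem_Ici.2 harg) harg
    have := hp0 ((p 0 + 1)/c)
    have hcc : c * ((p 0 + 1)/c) = p 0 + 1 := by field_simp
    simp only [mul_zero, add_zero] at hbig
    rw [hcc] at hbig
    linarith
  -- Part 2: tendsto 0
  have part2 : Tendsto p atTop (nhds 0) := by
    rw [Metric.tendsto_atTop]
    intro ε hε
    obtain ⟨s₀, hs₀, hps₀⟩ := hsmall ε hε
    refine ⟨s₀, fun s hs => ?_⟩
    have hps : p s ≤ p s₀ := hanti (Set.mem_Ici.2 hs₀) (Set.mem_Ici.2 (le_trans hs₀ hs)) hs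
    have := hp0 s
    rw [Real.dist_eq, sub_zero, abs_of_pos this]
    linarith
  -- Part 3: rate
  have part3 : ∃ S > (0 : ℝ), ∃ K > (0 : ℝ), ∀ s ≥ S, p s ≤ K / s := by
    obtain ⟨s₁, hs₁0, hps₁⟩ := hsmall (1/2) (by norm_num)
    set c : ℝ := μmin / 4 with hc
    have hcpos : 0 < c := by positivity
    -- q(s) = 1/p(s) - c s is monotone on [s₁, ∞)
    have hqmono : MonotoneOn (fun s => (p s)⁻¹ - c * s) (Set.Ici s₁) := by
      apply monotoneOn_of_deriv_nonneg (convex_Ici s₁)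
      · apply ContinuousOn.sub
        · exact (hpdiff.continuous.continuousOn).inv₀ (fun x _ => (hp0 x).ne')
        · fun_prop
      · intro x hx
        exact (((hpdiff x).inv (hp0 x).ne').sub (by fun_prop)).differentiableWithinAt
      · intro x hx
        rw [interior_Ici] at hx
        have hx1 : s₁ ≤ x := hx.le
        have hx0 : (0:ℝ) ≤ x := le_trans hs₁0 hx1
        have hinv : HasDerivAt (fun s => (p s)⁻¹) (-(deriv p x) / (p x) ^ 2) x :=
          ((hpdiff x).hasDerivAt.inv (hp0 x).ne')
        have hqd : HasDerivAt (fun s => (p s)⁻¹ - c * s) (-(deriv p x) / (p x) ^ 2 - c) x :=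
          hinv.sub (by simpa using (hasDerivAt_id x).const_mul c)
        rw [hqd.deriv]
        have hpx : p x ≤ p s₁ := hanti (Set.mem_Ici.2 hs₁0) (Set.mem_Ici.2 hx0) hx1
        have hhalf : p x < 1/2 := lt_of_le_of_lt hpx hps₁
        have h1 := hple x hx0
        have hpp := hp0 x
        have hp2 : (0:ℝ) < (p x)^2 := by positivity
        rw [sub_nonneg, le_div_iff₀ hp2]
        have h4 : (1/4:ℝ) ≤ (1 - p x)^2 := by nlinarith
        have hmp : (p x * (1 - p x))^2 = p x^2 * (1 - p x)^2 := by ring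
        have h5 := mul_le_mul_of_nonneg_left h4
          (by positivity : (0:ℝ) ≤ μmin * p x ^ 2)
        rw [hc]
        nlinarith
    refine ⟨2 * s₁ + 1, by positivity, 8 / μmin, by positivity, fun s hs => ?_⟩
    have hs1x : s₁ ≤ s := by linarith
    have hkey := hqmono (Set.mem_Ici.2 le_rfl) (Set.mem_Ici.2 hs1x) hs1x
    simp only at hkey
    have hinv1 : 0 < (p s₁)⁻¹ := inv_pos.2 (hp0 s₁)
    have hlb : c * (s - s₁) ≤ (p s)⁻¹ := by
      have := hp0 s₁
      nlinarith
    have hhalf : s / 2 ≤ s - s₁ := by linarith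
    have hspos : 0 < s := by linarith
    have hlb2 : c * (s / 2) ≤ (p s)⁻¹ := le_trans (by nlinarith) hlb
    have hlb2' : μmin * s / 8 ≤ (p s)⁻¹ := by rw [hc] at hlb2; linarith
    have hmpos : 0 < μmin * s / 8 := by positivity
    have := hp0 s
    have hinv := inv_anti₀ hmpos hlb2'
    rw [inv_inv] at hinv
    have heq : (μmin * s / 8)⁻¹ = 8 / μmin / s := by
      field_simp
    rw [heq] at hinv
    exact hinv
  refine ⟨part1, part2, part3, ?_⟩
  -- Part 4
  have h1 : Tendsto (fun s => 1 - p s) atTop (nhds 1) := by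
    have h := (tendsto_const_nhds :
      Tendsto (fun _ : ℝ => (1:ℝ)) atTop (nhds 1)).sub part2
    simpa using h
  have h2 : Tendsto (fun s => ∑ t ∈ Finset.Icc 1 L, (1 - p s) ^ (t - 1)) atTop
      (nhds (∑ t ∈ Finset.Icc 1 L, (1:ℝ) ^ (t - 1))) := by
    apply tendsto_finset_sum
    intro t ht
    exact h1.pow (t - 1)
  have h3 : (∑ t ∈ Finset.Icc 1 L, (1:ℝ) ^ (t - 1)) = (L : ℝ) := by
    simp [Nat.card_Icc]
  rwa [h3] at h2
end

section
/- Let L ≥ 2 be an integer and μ_1, …, μ_L, μ_min real numbers with μ_t ≥ μ_min > 0 for all t. Define J(p) = Σ_{t=1}^{L} μ_t (1-p)^{t-1} and F(θ) = J(σ(θ)), and let θ : ℝ → ℝ be differentiable with θ'(s) = F'(θ(s)) for all s ≥ 0. Then the expected path length Σ_{t=1}^{L} (1 - p(s))^{t-1}, where p(s) = σ(θ(s)), converges to L as s → ∞. -/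
open Filter Finset

noncomputable def sigd (x : ℝ) : ℝ := Real.exp (-x) / (1 + Real.exp (-x))^2

lemma one_add_exp_pos (x : ℝ) : 0 < 1 + Real.exp (-x) := by positivity

lemma sigd_pos (x : ℝ) : 0 < sigd x := by unfold sigd; positivity

lemma hasDerivAt_sigmoid (x : ℝ) : HasDerivAt sigmoid (sigd x) x := by
  have h1 : HasDerivAt (fun x : ℝ => 1 + Real.exp (-x)) (-Real.exp (-x)) x := by
    simpa using ((Real.hasDerivAt_exp (-x)).comp x (hasDerivAt_neg x)).const_add 1
  have h2 := h1.inv (ne_of_gt (one_add_exp_pos x))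
  have heq : sigmoid = fun y : ℝ => (1 + Real.exp (-y))⁻¹ := by
    funext y; unfold sigmoid; rw [one_div]
  rw [heq]
  refine h2.congr_deriv ?_
  unfold sigd; ring

/-- The candidate derivative of `F`. -/
noncomputable def Dfun (L : ℕ) (μ : ℕ → ℝ) (x : ℝ) : ℝ :=
  ∑ t ∈ Finset.Icc 1 L, μ t * (((t - 1 : ℕ) : ℝ) * (1 - sigmoid x) ^ (t - 1 - 1) * (-sigd x))

lemma hasDerivAt_F (L : ℕ) (μ : ℕ → ℝ) (J F : ℝ → ℝ)
    (hJ : ∀ q : ℝ, J q = ∑ t ∈ Finset.Icc 1 L, μ t * (1 - q) ^ (t - 1))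
    (hF : ∀ x : ℝ, F x = J (sigmoid x)) (x : ℝ) :
    HasDerivAt F (Dfun L μ x) x := by
  have heq : F = fun x => ∑ t ∈ Finset.Icc 1 L, μ t * (1 - sigmoid x) ^ (t - 1) := by
    funext y; rw [hF, hJ]
  rw [heq]
  apply HasDerivAt.fun_sum
  intro t _
  exact (((hasDerivAt_sigmoid x).const_sub 1).pow (t-1)).const_mul (μ t)

lemma Dfun_neg (L : ℕ) (hL : 2 ≤ L) (μ : ℕ → ℝ) (μmin : ℝ)
    (hμmin : 0 < μmin) (hμ : ∀ t ∈ Finset.Icc 1 L, μmin ≤ μ t) (x : ℝ) :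
    Dfun L μ x < 0 := by
  have h2 : (2 : ℕ) ∈ Finset.Icc 1 L := by simp [hL]
  have hσ : 0 < 1 - sigmoid x := by linarith [sigmoid_lt_one x]
  have hsum : 0 < ∑ t ∈ Finset.Icc 1 L,
      μ t * (((t - 1 : ℕ) : ℝ) * (1 - sigmoid x) ^ (t - 1 - 1) * sigd x) := by
    refine Finset.sum_pos' (fun t ht => ?_) ⟨2, h2, ?_⟩
    · have h1 : 0 ≤ μ t := le_trans hμmin.le (hμ t ht)
      have h2 : 0 < sigd x := sigd_pos x
      positivity
    · have hμ2 : 0 < μ 2 := lt_of_lt_of_le hμmin (hμ 2 h2)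
      have hd : 0 < sigd x := sigd_pos x
      norm_num
      positivity
  have : Dfun L μ x = -∑ t ∈ Finset.Icc 1 L,
      μ t * (((t - 1 : ℕ) : ℝ) * (1 - sigmoid x) ^ (t - 1 - 1) * sigd x) := by
    unfold Dfun
    rw [← Finset.sum_neg_distrib]
    congr 1; funext t; ring
  rw [this]; linarith

lemma continuous_Dfun (L : ℕ) (μ : ℕ → ℝ) : Continuous (Dfun L μ) := by
  apply continuous_finset_sum
  intro t _
  have hc : Continuous sigmoid := by
    unfold sigmoid
    exact continuous_const.div (by continuity) (fun x => (one_add_exp_pos x).ne')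
  have hd : Continuous sigd := by
    unfold sigd
    exact (by continuity : Continuous fun x : ℝ => Real.exp (-x)).div (by continuity)
      (fun x => by positivity)
  continuity

lemma sigmoid_tendsto_zero : Tendsto sigmoid atBot (nhds 0) := by
  have h1 : Tendsto (fun x : ℝ => 1 + Real.exp (-x)) atBot atTop := by
    apply tendsto_atTop_add_const_left
    exact Real.tendsto_exp_atTop.comp tendsto_neg_atBot_atTop
  exact h1.inv_tendsto_atTop.congr fun x => by simp [sigmoid, one_div]

/-- Under gradient flow `θ'(s) = F'(θ(s))` with `F(θ) = J(σ(θ))` and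
`J(p) = ∑_{t=1}^L μ_t (1-p)^{t-1}`, `μ_t ≥ μ_min > 0`: the expected path length
`∑_{t=1}^L (1 - p(s))^{t-1}`, where `p(s) = σ(θ(s))`, converges to `L` as `s → ∞`. -/
theorem expected_length_tendsto
    (L : ℕ) (hL : 2 ≤ L) (μ : ℕ → ℝ) (μmin : ℝ)
    (hμmin : 0 < μmin) (hμ : ∀ t ∈ Finset.Icc 1 L, μmin ≤ μ t)
    (J F : ℝ → ℝ)
    (hJ : ∀ q : ℝ, J q = ∑ t ∈ Finset.Icc 1 L, μ t * (1 - q) ^ (t - 1))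
    (hF : ∀ x : ℝ, F x = J (sigmoid x))
    (θ : ℝ → ℝ) (hθ : Differentiable ℝ θ)
    (hflow : ∀ s : ℝ, 0 ≤ s → deriv θ s = deriv F (θ s))
    (p : ℝ → ℝ) (hp : ∀ s, p s = sigmoid (θ s)) :
    Tendsto (fun s => ∑ t ∈ Finset.Icc 1 L, (1 - p s) ^ (t - 1))
      atTop (nhds (L : ℝ)) := by
  -- the flow equation in terms of Dfun
  have hDF : ∀ x, deriv F x = Dfun L μ x := fun x => (hasDerivAt_F L μ J F hJ hF x).deriv
  have hflow' : ∀ s : ℝ, 0 ≤ s → deriv θ s = Dfun L μ (θ s) := fun s hs => by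
    rw [hflow s hs, hDF]
  have hDneg : ∀ x, Dfun L μ x < 0 := Dfun_neg L hL μ μmin hμmin hμ
  -- θ is antitone on [0, ∞)
  have hanti : AntitoneOn θ (Set.Ici 0) := by
    refine antitoneOn_of_deriv_nonpos (convex_Ici 0) hθ.continuous.continuousOn
      hθ.differentiableOn (fun x hx => ?_)
    rw [interior_Ici] at hx
    rw [hflow' x (le_of_lt hx)]
    exact (hDneg (θ x)).le
  -- θ is unbounded below on [0, ∞)
  have hunbdd : ∀ M : ℝ, ∃ s : ℝ, 0 ≤ s ∧ θ s < M := by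
    intro M
    by_contra hcon
    push_neg at hcon
    have hlb : ∀ s : ℝ, 0 ≤ s → M ≤ θ s := fun s hs => hcon s hs
    -- θ s stays in [M, θ 0]
    have hub : ∀ s : ℝ, 0 ≤ s → θ s ≤ θ 0 := fun s hs =>
      hanti (Set.self_mem_Ici) hs hs
    have hM0 : M ≤ θ 0 := hlb 0 le_rfl
    -- max of Dfun on compact [M, θ 0]
    obtain ⟨x₀, hx₀, hmax⟩ := (isCompact_Icc (a := M) (b := θ 0)).exists_isMaxOn
      (Set.nonempty_Icc.2 hM0) (continuous_Dfun L μ).continuousOn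
    set c := Dfun L μ x₀ with hc
    have hcneg : c < 0 := hDneg x₀
    have hderle : ∀ s : ℝ, 0 ≤ s → deriv θ s ≤ c := by
      intro s hs
      rw [hflow' s hs]
      exact hmax ⟨hlb s hs, hub s hs⟩
    -- g s = θ s - c * s is antitone on [0, ∞)
    have hg : AntitoneOn (fun s => θ s - c * s) (Set.Ici 0) := by
      refine antitoneOn_of_deriv_nonpos (convex_Ici 0)
        (hθ.continuous.sub (continuous_const.mul continuous_id)).continuousOn
        (fun x _ => ((hθ x).sub (by fun_prop)).differentiableWithinAt) (fun x hx => ?_)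
      rw [interior_Ici] at hx
      have hd : HasDerivAt (fun s => θ s - c * s) (deriv θ x - c) x := by
        simpa using ((hθ x).hasDerivAt.fun_sub ((hasDerivAt_id x).const_mul c))
      rw [hd.deriv]
      linarith [hderle x hx.le]
    -- evaluate at s = (M - θ 0 - 1)/c > 0
    set s₁ : ℝ := (M - θ 0 - 1) / c with hs₁
    have hs₁pos : 0 < s₁ := div_pos_of_neg_of_neg (by linarith) hcneg
    have := hg (Set.self_mem_Ici) (Set.mem_Ici.2 hs₁pos.le) hs₁pos.le
    simp only [mul_zero, sub_zero] at this
    have hcs : c * s₁ = M - θ 0 - 1 := by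
      rw [hs₁, mul_div_cancel₀ _ hcneg.ne]
    have : θ s₁ ≤ M - 1 := by linarith
    linarith [hlb s₁ hs₁pos.le]
  -- θ → -∞
  have hθbot : Tendsto θ atTop atBot := by
    rw [tendsto_atBot]
    intro b
    obtain ⟨s₀, hs₀, hlt⟩ := hunbdd b
    filter_upwards [eventually_ge_atTop s₀] with s hs
    exact le_trans (hanti (Set.mem_Ici.2 hs₀) (Set.mem_Ici.2 (le_trans hs₀ hs)) hs) hlt.le
  -- p → 0
  have hp0 : Tendsto p atTop (nhds 0) := by
    have := sigmoid_tendsto_zero.comp hθbot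
    refine this.congr fun s => ?_
    rw [hp]; rfl
  -- finish
  have hsum : Tendsto (fun s => ∑ t ∈ Finset.Icc 1 L, (1 - p s) ^ (t - 1))
      atTop (nhds (∑ t ∈ Finset.Icc 1 L, (1 : ℝ))) := by
    apply tendsto_finset_sum
    intro t _
    have : Tendsto (fun s => 1 - p s) atTop (nhds 1) := by
      simpa using (tendsto_const_nhds (x := (1:ℝ))).sub hp0
    simpa using this.pow (t - 1)
  have hcard : (∑ t ∈ Finset.Icc 1 L, (1 : ℝ)) = (L : ℝ) := by
    rw [Finset.sum_const, Nat.card_Icc]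
    simp
  rwa [hcard] at hsum
end
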